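/- arXiv:2502.03633 — 6 statements merged into one kernel-verified Lean document; each statement's English description precedes it below -/
import Mathlib

section
/- Given two convex polygons A and B in ℝ² (considered as boundaries of convex hulls of finite point sets), if every vertex of A is within distance ε of (the boundary of) B and every vertex of B is within distance ε of A, then the Hausdorff distance between A and B is at most ε. -/
/-!
Each hull is the convex hull of its extreme points and closed ε-neighbourhoods of convex sets are
convex, so the vertex hypotheses bound the Hausdorff distance of the two hulls `P`, `Q` by `ε`.
Passing to boundaries does not increase it. A boundary point `x` of `P` lying outside `Q` has its
distance to `Q` realised on `∂Q`. If `x ∈ Q`, go from `x` in an (almost) outward normal direction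
of `P`: after a distance slightly more than `ε` the point is farther than `ε` from `P`, hence
outside `Q`, so `∂Q` is met within distance `ε` of `x`.
-/

open Metric Set
open scoped RealInnerProductSpace

theorem mem_cthickening_iff_infDist_le {α : Type*} [PseudoMetricSpace α] {s : Set α}
    (hs : s.Nonempty) {r : ℝ} (hr : 0 ≤ r) {x : α} : x ∈ cthickening r s ↔ infDist x s ≤ r := by
  rw [mem_cthickening_iff, infDist, ← ENNReal.le_ofReal_iff_toReal_le (infEDist_ne_top hs) hr]

theorem notMem_convexHull_sdiff_of_mem_extremePoints_convexHull {𝕜 E : Type*} [Ring 𝕜]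
    [LinearOrder 𝕜] [IsStrictOrderedRing 𝕜] [DenselyOrdered 𝕜] [AddCommGroup E] [Module 𝕜 E]
    [Module.IsTorsionFree 𝕜 E] {s : Set E} {x : E} (hx : x ∈ extremePoints 𝕜 (convexHull 𝕜 s)) :
    x ∉ convexHull 𝕜 (s \ {x}) := fun hmem =>
  ((convex_convexHull 𝕜 s).mem_extremePoints_iff_mem_sdiff_convexHull_sdiff.1 hx).2 <|
    convexHull_mono (sdiff_subset_sdiff_left (subset_convexHull 𝕜 s)) hmem

section NormedSpace

variable {E : Type*} [NormedAddCommGroup E] [NormedSpace ℝ E]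

theorem Set.Finite.convexHull_extremePoints_convexHull {s : Set E} (hs : s.Finite) :
    convexHull ℝ (extremePoints ℝ (convexHull ℝ s)) = convexHull ℝ s := by
  have h :=
    closure_convexHull_extremePoints (hs.isCompact_convexHull (𝕜 := ℝ)) (convex_convexHull ℝ s)
  rwa [((hs.subset extremePoints_convexHull_subset).isClosed_convexHull (𝕜 := ℝ)).closure_eq] at h

theorem infDist_le_of_mem_convexHull {s C : Set E} (hs : s.Finite) (hC : Convex ℝ C)
    (hC₀ : C.Nonempty) {r : ℝ} (hr : 0 ≤ r)
    (h : ∀ e ∈ extremePoints ℝ (convexHull ℝ s), infDist e C ≤ r) {x : E}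
    (hx : x ∈ convexHull ℝ s) : infDist x C ≤ r := by
  rw [← hs.convexHull_extremePoints_convexHull] at hx
  refine (mem_cthickening_iff_infDist_le hC₀ hr).1 <| convexHull_min ?_ (hC.cthickening r) hx
  exact fun e he => (mem_cthickening_iff_infDist_le hC₀ hr).2 (h e he)

theorem hausdorffDist_convexHull_le {s t : Set E} (hs : s.Finite) (ht : t.Finite)
    (hs₀ : s.Nonempty) (ht₀ : t.Nonempty) {r : ℝ} (hr : 0 ≤ r)
    (hst : ∀ e ∈ extremePoints ℝ (convexHull ℝ s), infDist e (convexHull ℝ t) ≤ r)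
    (hts : ∀ e ∈ extremePoints ℝ (convexHull ℝ t), infDist e (convexHull ℝ s) ≤ r) :
    hausdorffDist (convexHull ℝ s) (convexHull ℝ t) ≤ r :=
  hausdorffDist_le_of_infDist hr
    (fun _ => infDist_le_of_mem_convexHull hs (convex_convexHull ℝ t) ht₀.convexHull hr hst)
    (fun _ => infDist_le_of_mem_convexHull ht (convex_convexHull ℝ s) hs₀.convexHull hr hts)

theorem IsCompact.infDist_le_infDist_frontier [Nontrivial E] {K : Set E} (hK : IsCompact K)
    (hK₀ : K.Nonempty) (x : E) : infDist x K ≤ infDist x (frontier K) :=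
  infDist_le_infDist_of_subset hK.isClosed.frontier_subset
    (nonempty_frontier_iff.2 ⟨hK₀, hK.ne_univ⟩)

variable [FiniteDimensional ℝ E]

theorem infDist_frontier_le_infDist_compl {s : Set E} {x : E} (hx : x ∈ s) :
    infDist x (frontier s) ≤ infDist x sᶜ := by
  rcases eq_or_ne s univ with rfl | hs
  · simp
  obtain ⟨y, hy, hxy⟩ := exists_mem_frontier_infDist_compl_eq_dist hx hs
  exact hxy ▸ infDist_le_dist_of_mem hy

theorem infDist_frontier_le_infDist {s : Set E} {x : E} (hx : x ∉ s) :
    infDist x (frontier s) ≤ infDist x s := by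
  simpa using infDist_frontier_le_infDist_compl (s := sᶜ) hx

end NormedSpace

section InnerProductSpace

variable {E : Type*} [NormedAddCommGroup E] [InnerProductSpace ℝ E]

/-- The witness is the unit outward normal of `P` at the projection onto `P` of a point outside `P`
that is `δ`-close to `x`. -/
theorem exists_norm_eq_one_inner_sub_le_of_mem_frontier {P : Set E} (hP : Convex ℝ P)
    (hPc : IsComplete P) {x : E} (hx : x ∈ frontier P) {δ : ℝ} (hδ : 0 < δ) :
    ∃ u : E, ‖u‖ = 1 ∧ ∀ y ∈ P, ⟪u, y - x⟫ ≤ δ := by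
  have hP₀ : P.Nonempty := closure_nonempty_iff.1 ⟨x, frontier_subset_closure hx⟩
  obtain ⟨w, hwP, hxw⟩ :=
    Metric.mem_closure_iff.1 (frontier_eq_closure_inter_closure.subset hx).2 δ hδ
  obtain ⟨v, hvP, hv⟩ := exists_norm_eq_iInf_of_complete_convex hP₀ hPc hP w
  have hsep : ∀ y ∈ P, ⟪w - v, y - v⟫ ≤ 0 := (norm_eq_iInf_iff_real_inner_le_zero hP hvP).1 hv
  have hwv : 0 < ‖w - v‖ := norm_pos_iff.2 (sub_ne_zero.2 fun h => hwP (h ▸ hvP))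
  refine ⟨‖w - v‖⁻¹ • (w - v), by rw [norm_smul, norm_inv, norm_norm, inv_mul_cancel₀ hwv.ne'],
    fun y hy => ?_⟩
  rw [real_inner_smul_left, inv_mul_le_iff₀ hwv]
  have hsplit : ⟪w - v, y - x⟫ = ⟪w - v, y - v⟫ - ‖w - v‖ ^ 2 + ⟪w - v, w - x⟫ := by
    rw [show y - x = (y - v) - (w - v) + (w - x) by abel, inner_add_right, inner_sub_right,
      real_inner_self_eq_norm_sq]
  have hwx : ⟪w - v, w - x⟫ ≤ ‖w - v‖ * δ :=
    (real_inner_le_norm _ _).trans <| mul_le_mul_of_nonneg_left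
      (by rw [← dist_eq_norm, dist_comm]; exact hxw.le) hwv.le
  nlinarith [hsep y hy]

theorem sub_le_infDist_add_smul {P : Set E} (hP₀ : P.Nonempty) {x u : E} (hu : ‖u‖ = 1)
    {δ : ℝ} (h : ∀ y ∈ P, ⟪u, y - x⟫ ≤ δ) (t : ℝ) : t - δ ≤ infDist (x + t • u) P := by
  refine (le_infDist hP₀).2 fun y hy => ?_
  have hinner : ⟪u, x + t • u - y⟫ = t - ⟪u, y - x⟫ := by
    rw [show x + t • u - y = t • u - (y - x) by abel, inner_sub_right, real_inner_smul_right,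
      real_inner_self_eq_norm_sq, hu]
    ring
  calc t - δ ≤ ⟪u, x + t • u - y⟫ := by linarith [h y hy]
    _ ≤ ‖u‖ * ‖x + t • u - y‖ := real_inner_le_norm _ _
    _ = dist (x + t • u) y := by rw [hu, one_mul, dist_eq_norm]

theorem infDist_compl_le_of_mem_frontier {P Q : Set E} (hP : Convex ℝ P) (hPc : IsComplete P)
    {x : E} (hxP : x ∈ frontier P) (hxQ : x ∈ Q) {r : ℝ} (hQP : ∀ q ∈ Q, infDist q P ≤ r) :
    infDist x Qᶜ ≤ r := by
  have hP₀ : P.Nonempty := closure_nonempty_iff.1 ⟨x, frontier_subset_closure hxP⟩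
  have hr : 0 ≤ r := infDist_nonneg.trans (hQP x hxQ)
  by_contra! hlt
  set D := infDist x Qᶜ
  obtain ⟨u, hu, hsupp⟩ :=
    exists_norm_eq_one_inner_sub_le_of_mem_frontier hP hPc hxP (δ := (D - r) / 3) (by linarith)
  set t := r + 2 * ((D - r) / 3) with ht
  have hdist : dist x (x + t • u) = t := by
    rw [dist_eq_norm, sub_add_cancel_left, norm_neg, norm_smul, hu, mul_one,
      Real.norm_of_nonneg (by linarith [ht])]
  have hmem : x + t • u ∈ Q := by
    by_contra hq
    linarith [infDist_le_dist_of_mem (x := x) (show x + t • u ∈ Qᶜ from hq), ht]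
  linarith [hQP _ hmem, sub_le_infDist_add_smul hP₀ hu hsupp t, ht]

theorem infDist_frontier_le_hausdorffDist [FiniteDimensional ℝ E] {P Q : Set E}
    (hP : Convex ℝ P) (hPc : IsComplete P) (hfin : hausdorffEDist P Q ≠ ⊤) {x : E}
    (hx : x ∈ frontier P) : infDist x (frontier Q) ≤ hausdorffDist P Q := by
  by_cases hxQ : x ∈ Q
  · refine (infDist_frontier_le_infDist_compl hxQ).trans <|
      infDist_compl_le_of_mem_frontier hP hPc hx hxQ fun q hq => ?_
    rw [hausdorffDist_comm]
    exact infDist_le_hausdorffDist_of_mem hq (by rwa [hausdorffEDist_comm])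
  · exact (infDist_frontier_le_infDist hxQ).trans <|
      infDist_le_hausdorffDist_of_mem (hPc.isClosed.frontier_subset hx) hfin

theorem hausdorffDist_frontier_le [FiniteDimensional ℝ E] {P Q : Set E} (hP : Convex ℝ P)
    (hQ : Convex ℝ Q) (hPc : IsCompact P) (hQc : IsCompact Q) (hP₀ : P.Nonempty)
    (hQ₀ : Q.Nonempty) : hausdorffDist (frontier P) (frontier Q) ≤ hausdorffDist P Q := by
  have hfin := hausdorffEDist_ne_top_of_nonempty_of_bounded hP₀ hQ₀ hPc.isBounded hQc.isBounded
  refine hausdorffDist_le_of_infDist hausdorffDist_nonneg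
    (fun x => infDist_frontier_le_hausdorffDist hP hPc.isComplete hfin) fun x hx => ?_
  rw [hausdorffDist_comm]
  exact infDist_frontier_le_hausdorffDist hQ hQc.isComplete (by rwa [hausdorffEDist_comm]) hx

end InnerProductSpace

/-- If every vertex of the convex polygon `∂(conv A)` is within distance `ε` of the
boundary of `conv B` and every vertex of `∂(conv B)` is within distance `ε` of the
boundary of `conv A`, then the Hausdorff distance between the two boundaries is at
most `ε`.  (Vertices of the polygon are the extreme points of the hull.) -/
theorem stmt3 (A B : Finset (EuclideanSpace ℝ (Fin 2)))
    (hA : A.Nonempty) (hB : B.Nonempty) (ε : ℝ)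
    (h1 : ∀ a ∈ A, a ∉ convexHull ℝ ((A : Set (EuclideanSpace ℝ (Fin 2))) \ {a}) →
      infDist a (frontier (convexHull ℝ (B : Set (EuclideanSpace ℝ (Fin 2))))) ≤ ε)
    (h2 : ∀ b ∈ B, b ∉ convexHull ℝ ((B : Set (EuclideanSpace ℝ (Fin 2))) \ {b}) →
      infDist b (frontier (convexHull ℝ (A : Set (EuclideanSpace ℝ (Fin 2))))) ≤ ε) :
    hausdorffDist (frontier (convexHull ℝ (A : Set (EuclideanSpace ℝ (Fin 2)))))
      (frontier (convexHull ℝ (B : Set (EuclideanSpace ℝ (Fin 2))))) ≤ ε := by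
  set P := convexHull ℝ (A : Set (EuclideanSpace ℝ (Fin 2)))
  set Q := convexHull ℝ (B : Set (EuclideanSpace ℝ (Fin 2)))
  have hPc : IsCompact P := A.finite_toSet.isCompact_convexHull (𝕜 := ℝ)
  have hQc : IsCompact Q := B.finite_toSet.isCompact_convexHull (𝕜 := ℝ)
  have hP₀ : P.Nonempty := hA.to_set.convexHull
  have hQ₀ : Q.Nonempty := hB.to_set.convexHull
  have hPQ : ∀ e ∈ extremePoints ℝ P, infDist e Q ≤ ε := fun e he =>
    (hQc.infDist_le_infDist_frontier hQ₀ e).trans <| h1 e (extremePoints_convexHull_subset he)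
      (notMem_convexHull_sdiff_of_mem_extremePoints_convexHull he)
  have hQP : ∀ e ∈ extremePoints ℝ Q, infDist e P ≤ ε := fun e he =>
    (hPc.infDist_le_infDist_frontier hP₀ e).trans <| h2 e (extremePoints_convexHull_subset he)
      (notMem_convexHull_sdiff_of_mem_extremePoints_convexHull he)
  have hε : 0 ≤ ε := by
    obtain ⟨e, he⟩ := hPc.extremePoints_nonempty hP₀
    exact infDist_nonneg.trans (hPQ e he)
  calc hausdorffDist (frontier P) (frontier Q) ≤ hausdorffDist P Q :=
        hausdorffDist_frontier_le (convex_convexHull ℝ _) (convex_convexHull ℝ _) hPc hQc hP₀ hQ₀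
    _ ≤ ε := hausdorffDist_convexHull_le A.finite_toSet B.finite_toSet hA hB hε hPQ hQP
end

section
/- Let A be the boundary of a compact convex set in ℝ², let p be a point on A lying in the relative interior of a segment [s,t] ⊆ A, and suppose the open disk D of radius ε centered at p is disjoint from a nonempty compact convex set K lying entirely in the closed half-plane determined by the line through s and t containing A's convex body. If a line m separates D from K, then at least one of s or t has distance greater than ε from K. -/
open Metric Set

/-!
A unit functional `f` below `c` on the open `ε`-ball about `p` satisfies `f p + ε ≤ c`. Since `f` is
affine along `[s,t]` and `p` lies on that segment, one endpoint, say `s`, also has `f s + ε ≤ c`;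
as `f > c` on `K` and `f` is `1`-Lipschitz, every point of `K` is farther than `ε` from `s`
(strictly, because the distance is attained on the compact set `K`).
-/

namespace ContinuousLinearMap

variable {E : Type*} [NormedAddCommGroup E] [NormedSpace ℝ E]

theorem add_mul_norm_le_of_forall_mem_ball_lt (f : E →L[ℝ] ℝ) {p : E} {ε c : ℝ} (hε : 0 < ε)
    (h : ∀ x ∈ ball p ε, f x < c) : f p + ε * ‖f‖ ≤ c := by
  by_contra! hlt
  obtain ⟨x, hx, hfx⟩ := f.exists_lt_apply_of_lt_opNorm
    (r := (c - f p) / ε) (by rw [div_lt_iff₀ hε]; linarith)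
  rw [div_lt_iff₀ hε] at hfx
  obtain ⟨y, hy, hfy⟩ : ∃ y : E, ‖y‖ < 1 ∧ f y = ‖f x‖ := by
    rcases abs_choice (f x) with hpos | hneg
    · exact ⟨x, hx, hpos.symm⟩
    · exact ⟨-x, by rwa [norm_neg], by rw [map_neg, Real.norm_eq_abs, hneg]⟩
  have hmem : p + ε • y ∈ ball p ε := by
    rw [mem_ball_iff_norm, add_sub_cancel_left, norm_smul, Real.norm_of_nonneg hε.le]
    exact mul_lt_of_lt_one_right hε hy
  have := h _ hmem
  rw [map_add, map_smul, smul_eq_mul, hfy] at this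
  linarith

theorem lt_infDist_of_add_le_of_lt_on (f : E →L[ℝ] ℝ) {K : Set E} (hKc : IsCompact K)
    (hKne : K.Nonempty) (hf : ‖f‖ ≤ 1) {x : E} {ε c : ℝ} (hx : f x + ε ≤ c)
    (hK : ∀ y ∈ K, c < f y) : ε < infDist x K := by
  obtain ⟨y, hyK, hy⟩ := hKc.exists_infDist_eq_dist hKne x
  calc ε < f y - f x := by linarith [hK y hyK]
    _ = f (y - x) := (map_sub f y x).symm
    _ ≤ ‖f (y - x)‖ := le_abs_self _
    _ ≤ ‖y - x‖ := by simpa using f.le_of_opNorm_le hf (y - x)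
    _ = infDist x K := by rw [hy, dist_comm, dist_eq_norm]

end ContinuousLinearMap

theorem stmt4_general (K : Set (EuclideanSpace ℝ (Fin 2)))
    (s t p : EuclideanSpace ℝ (Fin 2))
    (hp : p ∈ openSegment ℝ s t)
    (ε : ℝ) (hε : 0 < ε)
    (hKne : K.Nonempty) (hKc : IsCompact K)
    (f : EuclideanSpace ℝ (Fin 2) →L[ℝ] ℝ) (hf : ‖f‖ = 1) (c : ℝ)
    (hsep1 : ∀ x ∈ ball p ε, f x < c) (hsep2 : ∀ y ∈ K, c < f y) :
    ε < infDist s K ∨ ε < infDist t K := by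
  have hpc : f p + ε ≤ c := by
    simpa [hf] using f.add_mul_norm_le_of_forall_mem_ball_lt hε hsep1
  have hmin : min (f s) (f t) ≤ f p :=
    (f.toLinearMap.concaveOn convex_univ).ge_on_segment trivial trivial
      (openSegment_subset_segment ℝ s t hp)
  rcases min_le_iff.mp hmin with hs | ht
  · exact .inl (f.lt_infDist_of_add_le_of_lt_on hKc hKne hf.le (by linarith) hsep2)
  · exact .inr (f.lt_infDist_of_add_le_of_lt_on hKc hKne hf.le (by linarith) hsep2)

/-- Key case in the discrete-Hausdorff lemma: `p` lies on the boundary of a compact convex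
body `K0`, in the relative interior of a segment `[s,t]` contained in that boundary; the
open disk `D` of radius `ε` about `p` is disjoint from a nonempty compact convex set `K`
lying in the closed half-plane (through `s` and `t`) containing `K0`.  If a line separates
`D` from `K`, then `s` or `t` has distance greater than `ε` from `K`. -/
theorem stmt4 (K0 K : Set (EuclideanSpace ℝ (Fin 2)))
    (hK0c : IsCompact K0) (hK0 : Convex ℝ K0)
    (s t p : EuclideanSpace ℝ (Fin 2))
    (hp : p ∈ openSegment ℝ s t) (hseg : segment ℝ s t ⊆ frontier K0)
    (ε : ℝ) (hε : 0 < ε)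
    (hKne : K.Nonempty) (hKc : IsCompact K) (hK : Convex ℝ K)
    (hdisj : ball p ε ∩ K = ∅)
    (g : EuclideanSpace ℝ (Fin 2) →L[ℝ] ℝ) (hg : g ≠ 0) (hgst : g s = g t)
    (hhalfK0 : K0 ⊆ {x | g x ≤ g s}) (hhalfK : K ⊆ {x | g x ≤ g s})
    (f : EuclideanSpace ℝ (Fin 2) →L[ℝ] ℝ) (hf : ‖f‖ = 1) (c : ℝ)
    (hsep1 : ∀ x ∈ ball p ε, f x < c) (hsep2 : ∀ y ∈ K, c < f y) :
    ε < infDist s K ∨ ε < infDist t K :=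
  stmt4_general K s t p hp ε hε hKne hKc f hf c hsep1 hsep2
end

section
/- Let R be a finite family of pairwise disjoint closed unit disks in ℝ², let P be a realization (one point per disk), and let Q be the set of extreme points of conv(P). Let B_1, ..., B_k be the boundary disks of R, i.e. the disks whose centers give the vertices of the boundary of the convex hull of the centers, taken in cyclic order along that boundary. Then every vertex of conv(P), i.e. every point of Q, lies in some strip conv(B_i ∪ B_{i+1}) for consecutive boundary disks B_i, B_{i+1}. -/
open Metric Set


open scoped RealInnerProductSpace Pointwise

private lemma seg_cross' {E : Type*} [NormedAddCommGroup E] [NormedSpace ℝ E]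
    {H : Set E} {x y : E} (hx : x ∈ H) (hy : y ∉ H) :
    ∃ w ∈ frontier H, dist x w ≤ dist x y ∧ dist y w ≤ dist y x := by
  have hseg : (segment ℝ x y ∩ frontier H).Nonempty := by
    by_contra hemp
    rw [not_nonempty_iff_eq_empty] at hemp
    by_cases hxf : x ∈ frontier H
    · exact absurd (mem_inter (left_mem_segment ℝ x y) hxf) (by simp [hemp])
    by_cases hyf : y ∈ frontier H
    · exact absurd (mem_inter (right_mem_segment ℝ x y) hyf) (by simp [hemp])
    have hxi : x ∈ interior H := by
      rcases (em (x ∈ interior H)) with h | h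
      · exact h
      · exact absurd ⟨subset_closure hx, h⟩ hxf
    have hyc : y ∉ closure H := by
      intro h
      rcases (em (y ∈ interior H)) with h' | h'
      · exact hy (interior_subset h')
      · exact hyf ⟨h, h'⟩
    have hpre : IsPreconnected (segment ℝ x y) := (convex_segment x y).isPreconnected
    have hcover : segment ℝ x y ⊆ interior H ∪ (closure H)ᶜ := by
      intro w hw
      rcases (em (w ∈ interior H)) with h | h
      · exact Or.inl h
      rcases (em (w ∈ closure H)) with h' | h'
      · exact absurd (mem_inter hw (show w ∈ frontier H from ⟨h', h⟩)) (by simp [hemp])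
      · exact Or.inr h'
    obtain ⟨w, hwseg, hw1, hw2⟩ := hpre (interior H) (closure H)ᶜ isOpen_interior
      (isClosed_closure.isOpen_compl) hcover ⟨x, left_mem_segment ℝ x y, hxi⟩
      ⟨y, right_mem_segment ℝ x y, hyc⟩
    exact hw2 (subset_closure (interior_subset hw1))
  obtain ⟨w, hwseg, hwf⟩ := hseg
  obtain ⟨a, b, ha, hb, hab, rfl⟩ := hwseg
  refine ⟨_, hwf, ?_, ?_⟩
  · have hxy : x - (a • x + b • y) = b • (x - y) := by
      have haa : a = 1 - b := by linarith
      subst haa; module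
    rw [dist_eq_norm, hxy, norm_smul, Real.norm_eq_abs, abs_of_nonneg hb, dist_eq_norm]
    have hb1 : b ≤ 1 := by linarith
    nlinarith [norm_nonneg (x - y)]
  · have hxy : y - (a • x + b • y) = a • (y - x) := by
      have hbb : b = 1 - a := by linarith
      subst hbb; module
    rw [dist_eq_norm, hxy, norm_smul, Real.norm_eq_abs, abs_of_nonneg ha, dist_eq_norm]
    have ha1 : a ≤ 1 := by linarith
    nlinarith [norm_nonneg (y - x)]


/-- Let `R` be a finite family of pairwise disjoint closed unit disks and `P` a
realization (one point per disk).  Every extreme point of `conv P` lies within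
distance `1` of the spine hull, i.e. of the boundary of the convex hull of the
centers of the boundary disks (those disks met by the boundary of `conv (⋃ R)`). -/
theorem stmt14 (n : ℕ) (c : Fin n → EuclideanSpace ℝ (Fin 2))
    (hdisj : ∀ i j, i ≠ j → Disjoint (closedBall (c i) 1) (closedBall (c j) 1))
    (p : Fin n → EuclideanSpace ℝ (Fin 2))
    (hp : ∀ i, p i ∈ closedBall (c i) 1)
    (q : EuclideanSpace ℝ (Fin 2)) (hq : q ∈ Set.range p)
    (hqext : q ∉ convexHull ℝ (Set.range p \ {q})) :
    infDist q (frontier (convexHull ℝ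
        (c '' {i | ((frontier (convexHull ℝ (⋃ j, closedBall (c j) 1))) ∩
          closedBall (c i) 1).Nonempty}))) ≤ 1 := by
  classical
  by_contra hcon
  push_neg at hcon
  obtain ⟨i, rfl⟩ := hq
  set K := convexHull ℝ (⋃ j, closedBall (c j) 1) with hK
  set S : Set (Fin n) := {i | (frontier K ∩ closedBall (c i) 1).Nonempty} with hS
  set H := convexHull ℝ (c '' S) with hH
  -- basic inclusions
  have hdiskK : ∀ m, closedBall (c m) 1 ⊆ K := fun m y hy =>
    subset_convexHull ℝ _ (mem_iUnion.2 ⟨m, hy⟩)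
  have hHK : H ⊆ K := convexHull_mono (by
    rintro _ ⟨j, hj, rfl⟩
    exact mem_iUnion.2 ⟨j, mem_closedBall_self (by norm_num)⟩)
  -- key lemma: the maximizing center in any nonzero direction is a boundary disk
  have lemA : ∀ v : EuclideanSpace ℝ (Fin 2), v ≠ 0 → ∃ j, j ∈ S ∧ ∀ m, ⟪v, c m⟫ ≤ ⟪v, c j⟫ := by
    intro v hv
    obtain ⟨j, -, hj⟩ := Finset.exists_max_image Finset.univ (fun m => ⟪v, c m⟫)
      ⟨i, Finset.mem_univ i⟩
    refine ⟨j, ?_, fun m => hj m (Finset.mem_univ m)⟩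
    have hvn : (0:ℝ) < ‖v‖ := norm_pos_iff.2 hv
    set u : EuclideanSpace ℝ (Fin 2) := ‖v‖⁻¹ • v with hu
    have hun : ‖u‖ = 1 := by
      rw [hu, norm_smul, Real.norm_eq_abs, abs_of_nonneg (by positivity)]
      field_simp
    have hvu : ⟪v, u⟫ = ‖v‖ := by
      rw [hu, real_inner_smul_right, real_inner_self_eq_norm_mul_norm]
      field_simp
    have hlin : IsLinearMap ℝ (fun w : EuclideanSpace ℝ (Fin 2) => ⟪v, w⟫) :=
      ⟨fun a b => inner_add_right v a b, fun r a => real_inner_smul_right v a r⟩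
    have hKle : ∀ y ∈ K, ⟪v, y⟫ ≤ ⟪v, c j⟫ + ‖v‖ := by
      intro y hy
      refine convexHull_min ?_ (convex_halfSpace_le hlin _) hy
      intro z hz
      obtain ⟨m, hm⟩ := mem_iUnion.1 hz
      have h1 : ⟪v, z - c m⟫ ≤ ‖v‖ * ‖z - c m‖ := real_inner_le_norm _ _
      have h2 : ‖z - c m‖ ≤ 1 := by rw [← dist_eq_norm]; exact hm
      have h3 : ⟪v, z⟫ = ⟪v, c m⟫ + ⟪v, z - c m⟫ := by
        rw [← inner_add_right]
        congr 1
        abel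
      have h4 := hj m (Finset.mem_univ m)
      simp only [mem_setOf_eq]
      nlinarith
    set x : EuclideanSpace ℝ (Fin 2) := c j + u with hx
    have hxball : x ∈ closedBall (c j) 1 := by
      rw [mem_closedBall, hx, dist_eq_norm, add_sub_cancel_left, hun]
    have hxK : x ∈ K := hdiskK j hxball
    have hfx : ⟪v, x⟫ = ⟪v, c j⟫ + ‖v‖ := by
      rw [hx, inner_add_right, hvu]
    have hxint : x ∉ interior K := by
      intro hxi
      obtain ⟨ε, hε, hball⟩ := Metric.isOpen_iff.1 isOpen_interior x hxi
      have hyK : x + (ε/2) • u ∈ K := interior_subset (hball (by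
        rw [mem_ball, dist_eq_norm, add_sub_cancel_left, norm_smul, Real.norm_eq_abs,
          abs_of_nonneg (by positivity), hun]
        linarith))
      have h5 := hKle _ hyK
      rw [inner_add_right, hfx, real_inner_smul_right, hvu] at h5
      nlinarith
    rw [hS]
    exact ⟨x, ⟨subset_closure hxK, hxint⟩, hxball⟩
  have hSne : S.Nonempty := by
    obtain ⟨j, hj, -⟩ := lemA (EuclideanSpace.single 0 1) (by
      intro h
      have := congrArg norm h
      simp [EuclideanSpace.norm_single] at this)
    exact ⟨j, hj⟩
  -- every center lies in H
  have hcH : ∀ m, c m ∈ H := by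
    intro m
    by_contra hm
    have hclosed : IsClosed H := (Set.toFinite (c '' S)).isClosed_convexHull (𝕜 := ℝ)
    obtain ⟨f, b, hfb, hbm⟩ :=
      geometric_hahn_banach_closed_point (convex_convexHull ℝ _) hclosed hm
    set v := (InnerProductSpace.toDual ℝ (EuclideanSpace ℝ (Fin 2))).symm f with hv
    have hfv : ∀ y, f y = ⟪v, y⟫ := fun y => (InnerProductSpace.toDual_symm_apply).symm
    obtain ⟨j0, hj0⟩ := hSne
    have hj0H : c j0 ∈ H := subset_convexHull ℝ _ ⟨j0, hj0, rfl⟩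
    have hvne : v ≠ 0 := by
      intro h0
      have h1 := hfb _ hj0H
      have h2 := hbm
      rw [hfv] at h1 h2
      rw [h0] at h1 h2
      simp only [inner_zero_left] at h1 h2
      linarith
    obtain ⟨j, hjS, hjmax⟩ := lemA v hvne
    have hcjH : c j ∈ H := subset_convexHull ℝ _ ⟨j, hjS, rfl⟩
    have h1 := hfb _ hcjH
    rw [hfv] at h1 hbm
    have h2 := hjmax m
    linarith
  -- K is within distance 1 of H
  have hKsub : K ⊆ H + closedBall (0 : EuclideanSpace ℝ (Fin 2)) 1 := by
    refine convexHull_min ?_ ((convex_convexHull ℝ _).add (convex_closedBall _ _))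
    intro y hy
    obtain ⟨m, hm⟩ := mem_iUnion.1 hy
    exact ⟨c m, hcH m, y - c m,
      by rw [mem_closedBall, dist_zero_right, ← dist_eq_norm]; exact hm, by module⟩
  have hqK : p i ∈ K := hdiskK i (hp i)
  obtain ⟨z, hzH, w0, hw0, hzw⟩ := hKsub hqK
  have hdistz : dist (p i) z ≤ 1 := by
    rw [dist_eq_norm]
    have h1 : p i - z = w0 := by rw [← hzw]; module
    rw [h1]
    exact mem_closedBall_zero_iff.1 hw0
  by_cases hqH : p i ∈ H
  · -- q deep inside H
    set r := (1 + infDist (p i) (frontier H)) / 2 with hr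
    have hr1 : 1 < r := by rw [hr]; linarith
    have hrI : r < infDist (p i) (frontier H) := by rw [hr]; linarith
    have hball : closedBall (p i) r ⊆ H := by
      intro y hy
      by_contra hyH
      obtain ⟨w, hwf, hdw, -⟩ := seg_cross' hqH hyH
      have h1 : infDist (p i) (frontier H) ≤ dist (p i) w := infDist_le_dist_of_mem hwf
      rw [mem_closedBall, dist_comm] at hy
      linarith
    by_cases hiS : i ∈ S
    · -- boundary disk: distance contradiction
      rw [hS] at hiS
      obtain ⟨x, hxf, hxb⟩ := hiS
      have hd2 : dist (p i) x ≤ 2 := by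
        have h1 : dist (p i) (c i) ≤ 1 := hp i
        have h2 : dist (c i) x ≤ 1 := by rw [dist_comm]; exact hxb
        calc dist (p i) x ≤ dist (p i) (c i) + dist (c i) x := dist_triangle _ _ _
          _ ≤ 2 := by linarith
      have hbig : closedBall (p i) (r + 1) ⊆ K := by
        intro y hy
        rw [mem_closedBall] at hy
        rcases le_or_gt (dist y (p i)) r with hd | hd
        · exact hHK (hball (by rwa [mem_closedBall]))
        · set d := dist y (p i) with hdd
          have hdpos : (0:ℝ) < d := by linarith
          set q' := p i + (r / d) • (y - p i) with hq'
          have hq'b : q' ∈ closedBall (p i) r := by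
            rw [mem_closedBall, hq', dist_eq_norm, add_sub_cancel_left, norm_smul,
              Real.norm_eq_abs, abs_of_nonneg (by positivity), ← dist_eq_norm, ← hdd]
            rw [div_mul_cancel₀]
            exact hdpos.ne'
          have hq'H := hball hq'b
          set w' := y - q' with hw'
          have hw'n : ‖w'‖ ≤ 1 := by
            have he : w' = (1 - r/d) • (y - p i) := by rw [hw', hq']; module
            have hnd : ‖y - p i‖ = d := by rw [← dist_eq_norm]
            have hrd : r / d < 1 := (div_lt_one hdpos).2 hd
            rw [he, norm_smul, Real.norm_eq_abs,
              abs_of_nonneg (by linarith : (0:ℝ) ≤ 1 - r/d), hnd]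
            have hexp : (1 - r/d) * d = d - r := by field_simp
            rw [hexp]
            linarith
          have hsub : w' +ᵥ H ⊆ K := by
            rw [hH, ← convexHull_vadd]
            refine convexHull_mono ?_
            rintro _ ⟨_, ⟨j, hj, rfl⟩, rfl⟩
            refine mem_iUnion.2 ⟨j, ?_⟩
            rw [mem_closedBall, dist_eq_norm]
            simp only [vadd_eq_add, add_sub_cancel_right]
            exact hw'n
          have hyv : y ∈ w' +ᵥ H := by
            refine Set.mem_vadd_set.2 ⟨q', hq'H, ?_⟩
            rw [vadd_eq_add, hw']
            module
          exact hsub hyv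
      have hint : ball (p i) (r + 1) ⊆ interior K :=
        interior_maximal (ball_subset_closedBall.trans hbig) isOpen_ball
      have hxnot : x ∉ ball (p i) (r+1) := fun hxm => hxf.2 (hint hxm)
      rw [mem_ball, dist_comm] at hxnot
      push_neg at hxnot
      linarith
    · -- non-boundary disk: separation
      have hsub2 : p '' S ⊆ range p \ {p i} := by
        rintro _ ⟨j, hjS, rfl⟩
        refine ⟨⟨j, rfl⟩, ?_⟩
        simp only [mem_singleton_iff]
        intro hpj
        have hij : i ≠ j := fun h => hiS (h ▸ hjS)
        exact Set.disjoint_left.1 (hdisj i j hij) (hp i) (hpj ▸ hp j)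
      by_cases hqK' : p i ∈ convexHull ℝ (p '' S)
      · exact hqext (convexHull_mono hsub2 hqK')
      · have hK'c : IsClosed (convexHull ℝ (p '' S)) := (Set.toFinite _).isClosed_convexHull (𝕜 := ℝ)
        obtain ⟨f, b, hfb, hbq⟩ :=
          geometric_hahn_banach_closed_point (convex_convexHull ℝ _) hK'c hqK'
        set v := (InnerProductSpace.toDual ℝ (EuclideanSpace ℝ (Fin 2))).symm f with hv
        have hfv : ∀ y, f y = ⟪v, y⟫ := fun y => (InnerProductSpace.toDual_symm_apply).symm
        obtain ⟨j0, hj0⟩ := hSne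
        have hj0K' : p j0 ∈ convexHull ℝ (p '' S) := subset_convexHull ℝ _ ⟨j0, hj0, rfl⟩
        have hvne : v ≠ 0 := by
          intro h0
          have h1 := hfb _ hj0K'
          have h2 := hbq
          rw [hfv] at h1 h2
          rw [h0] at h1 h2
          simp only [inner_zero_left] at h1 h2
          linarith
        have hvn : (0:ℝ) < ‖v‖ := norm_pos_iff.2 hvne
        have hvu : ⟪v, (‖v‖⁻¹ • v : EuclideanSpace ℝ (Fin 2))⟫ = ‖v‖ := by
          rw [real_inner_smul_right, real_inner_self_eq_norm_mul_norm]
          field_simp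
        obtain ⟨j, hjS, hjmax⟩ := lemA v hvne
        have hu1 : p i + ‖v‖⁻¹ • v ∈ H := hball (by
          rw [mem_closedBall, dist_eq_norm, add_sub_cancel_left, norm_smul, Real.norm_eq_abs,
            abs_of_nonneg (by positivity), inv_mul_cancel₀ hvn.ne']
          linarith)
        have hlin : IsLinearMap ℝ (fun w : EuclideanSpace ℝ (Fin 2) => ⟪v, w⟫) :=
          ⟨fun a b => inner_add_right v a b, fun r a => real_inner_smul_right v a r⟩
        have hHhalf : H ⊆ {w : EuclideanSpace ℝ (Fin 2) | ⟪v, w⟫ ≤ ⟪v, c j⟫} := by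
          refine convexHull_min ?_ (convex_halfSpace_le hlin _)
          rintro _ ⟨m, hm, rfl⟩
          exact hjmax m
        have h1 : ⟪v, p i⟫ + ‖v‖ ≤ ⟪v, c j⟫ := by
          have := hHhalf hu1
          rw [mem_setOf_eq, inner_add_right, hvu] at this
          exact this
        have h2 : ⟪v, c j⟫ - ⟪v, p j⟫ ≤ ‖v‖ := by
          have ha : ⟪v, c j⟫ - ⟪v, p j⟫ = ⟪v, c j - p j⟫ := by
            rw [inner_sub_right]
          have hb : ⟪v, c j - p j⟫ ≤ ‖v‖ * ‖c j - p j‖ := real_inner_le_norm _ _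
          have hc : ‖c j - p j‖ ≤ 1 := by
            rw [← dist_eq_norm, dist_comm]
            exact hp j
          nlinarith
        have h3 := hfb _ (subset_convexHull ℝ _ ⟨j, hjS, rfl⟩)
        rw [hfv] at h3 hbq
        linarith
  · -- q outside H: cross the frontier
    obtain ⟨w, hwf, -, hdw⟩ := seg_cross' hzH hqH
    have h1 : infDist (p i) (frontier H) ≤ dist (p i) w := infDist_le_dist_of_mem hwf
    linarith
end

section
/- Let R be a finite family of pairwise disjoint closed unit disks in ℝ² in which every disk is a boundary disk (the boundary of conv(⋃R) intersects every disk), and let P be any realization. Then the Hausdorff distance between the boundary of conv(centers of R) and the boundary of conv(P) is at most 1. -/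
/-!
If closed convex sets `A` and `B` each lie within distance `r` of the other, so do their
frontiers. Let `x ∈ ∂A`. If `x ∉ int B`, the segment from `x` to any point of `B`
crosses `∂B`. If `x ∈ int B`, move `x` slightly out of `A` and project back onto `A`: this
gives a nearby point `a ∈ A ∩ B` with an outer unit normal `u`. The ray `a + t • u` stays at
distance at least `t` from `A`, so it leaves `B` before `t` exceeds `r` and therefore
crosses `∂B` within distance `r` of `a`. The two hulls are within `1` of each other because each center is within
`1` of its realized point.
-/

open Metric Set

theorem IsPreconnected.inter_frontier_nonempty {X : Type*} [TopologicalSpace X] {s t : Set X}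
    (hs : IsPreconnected s) (hst : (s ∩ t).Nonempty) (hsc : (s \ t).Nonempty) :
    (s ∩ frontier t).Nonempty := by
  by_contra h
  have hcover : s ⊆ interior t ∪ (closure t)ᶜ := fun z hz => by
    by_contra hz'
    simp only [mem_union, mem_compl_iff, not_or, not_not] at hz'
    exact h ⟨z, hz, hz'.2, hz'.1⟩
  rcases hs.subset_or_subset isOpen_interior isClosed_closure.isOpen_compl
    (disjoint_compl_right.mono_left interior_subset_closure) hcover with hsub | hsub
  · obtain ⟨z, hz, hzt⟩ := hsc
    exact hzt (interior_subset (hsub hz))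
  · obtain ⟨z, hz, hzt⟩ := hst
    exact hsub hz (subset_closure hzt)

theorem infDist_le_of_mem_cthickening {X : Type*} [PseudoMetricSpace X] {s : Set X} {x : X}
    {r : ℝ} (hr : 0 ≤ r) (hx : x ∈ cthickening r s) : infDist x s ≤ r :=
  ENNReal.toReal_le_of_le_ofReal hr (mem_cthickening_iff.mp hx)

section NormedSpace

variable {E : Type*} [NormedAddCommGroup E] [NormedSpace ℝ E]

theorem infDist_frontier_le_infDist_of_notMem_interior {s : Set E} {x : E}
    (hx : x ∉ interior s) : infDist x (frontier s) ≤ infDist x s := by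
  by_cases hxs : x ∈ closure s
  · rw [infDist_zero_of_mem (show x ∈ frontier s from ⟨hxs, hx⟩)]
    exact infDist_nonneg
  rcases s.eq_empty_or_nonempty with rfl | hs
  · simp
  refine (le_infDist hs).2 fun b hb => ?_
  obtain ⟨w, hw, hwf⟩ := (convex_segment x b).isPreconnected.inter_frontier_nonempty
    ⟨b, right_mem_segment ℝ x b, hb⟩
    ⟨x, left_mem_segment ℝ x b, fun hx' => hxs (subset_closure hx')⟩
  calc infDist x (frontier s) ≤ dist x w := infDist_le_dist_of_mem hwf
    _ ≤ dist x b := by linarith [dist_add_dist_of_mem_segment hw, dist_nonneg (x := w) (y := b)]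

theorem infDist_convexHull_range_le {ι : Type*} {c p : ι → E} {r : ℝ} (hr : 0 ≤ r)
    (hcp : ∀ i, dist (c i) (p i) ≤ r) {x : E} (hx : x ∈ convexHull ℝ (range c)) :
    infDist x (convexHull ℝ (range p)) ≤ r := by
  refine infDist_le_of_mem_cthickening hr
    (convexHull_min ?_ ((convex_convexHull ℝ _).cthickening r) hx)
  rintro _ ⟨i, rfl⟩
  exact mem_cthickening_of_dist_le _ (p i) r _ (subset_convexHull ℝ _ ⟨i, rfl⟩) (hcp i)

end NormedSpace

section InnerProductSpace

variable {E : Type*} [NormedAddCommGroup E] [InnerProductSpace ℝ E]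

theorem le_dist_add_smul_of_inner_le_zero {a b u : E} (hu : ‖u‖ = 1)
    (hab : inner ℝ (b - a) u ≤ 0) {t : ℝ} : t ≤ dist (a + t • u) b := by
  calc t ≤ t - inner ℝ (b - a) u := by linarith
    _ = inner ℝ (t • u - (b - a)) u := by
        rw [inner_sub_left (t • u), real_inner_smul_left, real_inner_self_eq_norm_sq, hu, one_pow,
          mul_one]
    _ = inner ℝ (a + t • u - b) u := by congr 1; abel
    _ ≤ ‖a + t • u - b‖ * ‖u‖ := real_inner_le_norm _ _
    _ = dist (a + t • u) b := by rw [hu, mul_one, dist_eq_norm]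

theorem Convex.exists_unit_normal_of_notMem [CompleteSpace E] {A : Set E} (hA : Convex ℝ A)
    (hAc : IsClosed A) {x y : E} (hx : x ∈ A) (hy : y ∉ A) :
    ∃ a ∈ A, dist y a ≤ dist y x ∧
      ∃ u : E, ‖u‖ = 1 ∧ ∀ b ∈ A, inner ℝ (b - a) u ≤ 0 := by
  obtain ⟨a, haA, ha⟩ := exists_norm_eq_iInf_of_complete_convex ⟨x, hx⟩ hAc.isComplete hA y
  have hya : 0 < ‖y - a‖ := norm_pos_iff.2 (sub_ne_zero.2 fun h => hy (h ▸ haA))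
  refine ⟨a, haA, ?_, ‖y - a‖⁻¹ • (y - a), ?_, fun b hb => ?_⟩
  · rw [dist_eq_norm, dist_eq_norm, ha]
    exact ciInf_le ⟨0, forall_mem_range.2 fun _ => norm_nonneg _⟩ (⟨x, hx⟩ : A)
  · rw [norm_smul, norm_inv, norm_norm, inv_mul_cancel₀ hya.ne']
  · rw [real_inner_smul_right, real_inner_comm]
    exact mul_nonpos_of_nonneg_of_nonpos (inv_nonneg.2 hya.le)
      ((norm_eq_iInf_iff_real_inner_le_zero hA haA).1 ha b hb)

theorem infDist_frontier_le_of_unit_normal {A B : Set E} {a u : E} {r : ℝ} (haA : a ∈ A)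
    (haB : a ∈ B) (hBc : IsClosed B) (hu : ‖u‖ = 1)
    (hnormal : ∀ b ∈ A, inner ℝ (b - a) u ≤ 0)
    (hBA : ∀ y ∈ B, infDist y A ≤ r) : infDist a (frontier B) ≤ r := by
  have hr : 0 ≤ r := infDist_nonneg.trans (hBA a haB)
  have hescape : ∀ t, t ≤ infDist (a + t • u) A := fun t =>
    (le_infDist ⟨a, haA⟩).2 fun b hb => le_dist_add_smul_of_inner_le_zero hu (hnormal b hb)
  let ray : ℝ → E := fun t => a + t • u
  obtain ⟨_, ⟨t, ht, rfl⟩, hwB⟩ :=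
    IsPreconnected.inter_frontier_nonempty
      (isPreconnected_Icc.image ray (by fun_prop : Continuous ray).continuousOn)
      ⟨a, ⟨0, ⟨le_rfl, by linarith⟩, by simp [ray]⟩, haB⟩
      ⟨ray (r + 1), ⟨r + 1, ⟨by linarith, le_rfl⟩, rfl⟩,
        fun h => by linarith [hescape (r + 1), hBA _ h]⟩
  calc infDist a (frontier B) ≤ dist a (a + t • u) := infDist_le_dist_of_mem hwB
    _ = t := by rw [dist_self_add_right, norm_smul, hu, mul_one, Real.norm_of_nonneg ht.1]
    _ ≤ r := (hescape t).trans (hBA _ (hBc.frontier_subset hwB))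

variable [CompleteSpace E]

theorem Convex.infDist_frontier_le {A B : Set E} {r : ℝ} (hA : Convex ℝ A) (hAc : IsClosed A)
    (hBc : IsClosed B) (hAB : ∀ x ∈ A, infDist x B ≤ r) (hBA : ∀ y ∈ B, infDist y A ≤ r)
    {x : E} (hx : x ∈ frontier A) : infDist x (frontier B) ≤ r := by
  have hxA : x ∈ A := hAc.frontier_subset hx
  by_cases hxB : x ∈ interior B
  case neg => exact (infDist_frontier_le_infDist_of_notMem_interior hxB).trans (hAB x hxA)
  refine le_of_forall_pos_le_add fun ε hε => ?_
  obtain ⟨ρ, hρ, hball⟩ := Metric.isOpen_iff.1 isOpen_interior x hxB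
  have hx_compl : x ∈ closure Aᶜ := by
    rw [closure_compl]
    exact hx.2
  obtain ⟨y, hyA, hxy⟩ := Metric.mem_closure_iff.1 hx_compl (min ε ρ / 2) (by positivity)
  obtain ⟨a, haA, hya, u, hu, hnormal⟩ := hA.exists_unit_normal_of_notMem hAc hxA hyA
  have hxa : dist x a < min ε ρ := by
    linarith [dist_triangle x y a, dist_comm x y]
  have haB : a ∈ B := interior_subset (hball (mem_ball_comm.1 (hxa.trans_le (min_le_right _ _))))
  calc infDist x (frontier B) ≤ infDist a (frontier B) + dist x a := infDist_le_infDist_add_dist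
    _ ≤ r + ε := add_le_add (infDist_frontier_le_of_unit_normal haA haB hBc hu hnormal hBA)
        (hxa.trans_le (min_le_left _ _)).le

theorem Convex.hausdorffDist_frontier_le {A B : Set E} {r : ℝ} (hr : 0 ≤ r) (hA : Convex ℝ A)
    (hAc : IsClosed A) (hB : Convex ℝ B) (hBc : IsClosed B) (hAB : ∀ x ∈ A, infDist x B ≤ r)
    (hBA : ∀ y ∈ B, infDist y A ≤ r) : hausdorffDist (frontier A) (frontier B) ≤ r :=
  hausdorffDist_le_of_infDist hr (fun _ hx => hA.infDist_frontier_le hAc hBc hAB hBA hx)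
    fun _ hx => hB.infDist_frontier_le hBc hAc hBA hAB hx

end InnerProductSpace

theorem stmt15_general (n : ℕ) (c : Fin n → EuclideanSpace ℝ (Fin 2))
    (p : Fin n → EuclideanSpace ℝ (Fin 2))
    (hp : ∀ i, p i ∈ closedBall (c i) 1) :
    hausdorffDist (frontier (convexHull ℝ (Set.range c)))
      (frontier (convexHull ℝ (Set.range p))) ≤ 1 := by
  have hull_closed (f : Fin n → EuclideanSpace ℝ (Fin 2)) :
      IsClosed (convexHull ℝ (range f)) :=
    ((finite_range f).isCompact_convexHull (𝕜 := ℝ)).isClosed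
  have hcp : ∀ i, dist (c i) (p i) ≤ 1 := fun i => dist_comm (c i) (p i) ▸ hp i
  exact (convex_convexHull ℝ _).hausdorffDist_frontier_le zero_le_one (hull_closed c)
    (convex_convexHull ℝ _) (hull_closed p) (fun _ => infDist_convexHull_range_le zero_le_one hcp)
    fun _ => infDist_convexHull_range_le zero_le_one hp

/-- Let `R` be a finite family of pairwise disjoint closed unit disks, each of which is a
boundary disk (the boundary of `conv (⋃ R)` intersects every disk), and let `P` be any
realization.  Then the Hausdorff distance between the boundary of the convex hull of the
centers and the boundary of the convex hull of `P` is at most `1`. -/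
theorem stmt15 (n : ℕ) (c : Fin n → EuclideanSpace ℝ (Fin 2))
    (hdisj : ∀ i j, i ≠ j → Disjoint (closedBall (c i) 1) (closedBall (c j) 1))
    (hbdry : ∀ i, ((frontier (convexHull ℝ (⋃ j, closedBall (c j) 1))) ∩
      closedBall (c i) 1).Nonempty)
    (p : Fin n → EuclideanSpace ℝ (Fin 2))
    (hp : ∀ i, p i ∈ closedBall (c i) 1) :
    hausdorffDist (frontier (convexHull ℝ (Set.range c)))
      (frontier (convexHull ℝ (Set.range p))) ≤ 1 :=
  stmt15_general n c p hp
end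

section
/- For a set R of n disks in the plane, if D ∈ R is 'potential' — meaning some realization of R has D's point as an extreme point of the convex hull and some realization does not — then D is 'unstable': there exists a fixed realization P' of R \ {D} and two points p, q ∈ D such that the lists of extreme points of conv(P' ∪ {p}) and conv(P' ∪ {q}) (identified by their disks, in counterclockwise order) differ. -/
open Metric Set

/-- The vertices (extreme points) of the convex hull of a set `T`:
those `x ∈ T` with `x ∉ conv (T \ {x})`. -/
def hullVertices (T : Set (EuclideanSpace ℝ (Fin 2))) : Set (EuclideanSpace ℝ (Fin 2)) :=
  {x ∈ T | x ∉ convexHull ℝ (T \ {x})}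

/-!
Move the other points linearly from a realization in which the point of `D` is extreme to one in
which it is not, and watch their moving hull `K t`. At each time either every point of `D` is a
hull vertex or none is, unless the time already witnesses instability. If none is, then `K t`
contains all of `D`; if all are, then `K t` meets `D` in at most one point, since a segment of
`D` inside `K t` contains points that are not among the finitely many generators. Fix two small
disjoint balls in `D` and let `F t` be the sum of the distances from their centres to `K t`;
`F` is continuous because `K t` moves Lipschitz-continuously. `F` vanishes at the end and is
large at the start, and a time where `F` takes an intermediate value has `K t` meeting both
balls but missing part of `D`, which is impossible.
-/

open AffineMap

lemma mem_hullVertices_insert_iff {p : EuclideanSpace ℝ (Fin 2)}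
    {S : Set (EuclideanSpace ℝ (Fin 2))} :
    p ∈ hullVertices (insert p S) ↔ p ∉ convexHull ℝ (S \ {p}) := by
  simp [hullVertices, insert_sdiff_of_mem S (mem_singleton p)]

lemma Metric.infDist_le_infDist_add_of_subset_cthickening {α : Type*} [PseudoMetricSpace α]
    {s t : Set α} {δ : ℝ} (x : α) (hs : s.Nonempty) (hδ : 0 ≤ δ)
    (hst : s ⊆ cthickening δ t) : infDist x t ≤ infDist x s + δ := by
  suffices infDist x t - δ ≤ infDist x s by linarith
  refine (le_infDist hs).2 fun y hy => ?_
  have hyt : infDist y t ≤ δ :=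
    ENNReal.toReal_le_of_le_ofReal hδ (mem_cthickening_iff.1 (hst hy))
  linarith [infDist_le_infDist_add_dist (x := x) (y := y) (s := t)]

lemma exists_mem_convexHull_sdiff_singleton {F : Type*} [AddCommGroup F] [Module ℝ F]
    {S K : Set F} (hS : S.Finite) (hK : Convex ℝ K) {z₁ z₂ : F}
    (hz₁ : z₁ ∈ K ∩ convexHull ℝ S) (hz₂ : z₂ ∈ K ∩ convexHull ℝ S) (hne : z₁ ≠ z₂) :
    ∃ q ∈ K, q ∈ convexHull ℝ (S \ {q}) := by
  have hseg : segment ℝ z₁ z₂ ⊆ K ∩ convexHull ℝ S :=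
    (hK.inter (convex_convexHull ℝ S)).segment_subset hz₁ hz₂
  have hinf : (segment ℝ z₁ z₂).Infinite := by
    rw [segment_eq_image_lineMap]
    exact (Icc_infinite zero_lt_one).image (lineMap_injective ℝ hne).injOn
  obtain ⟨q, hq, hqS⟩ := (hinf.sdiff hS).nonempty
  exact ⟨q, (hseg hq).1, by rw [sdiff_singleton_eq_self hqS]; exact (hseg hq).2⟩

section

variable {E : Type*} [NormedAddCommGroup E] [NormedSpace ℝ E]

lemma convexHull_subset_cthickening_convexHull {s t : Set E} {δ : ℝ}
    (h : s ⊆ cthickening δ t) : convexHull ℝ s ⊆ cthickening δ (convexHull ℝ t) :=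
  convexHull_min (h.trans (cthickening_subset_of_subset δ (subset_convexHull ℝ t)))
    ((convex_convexHull ℝ t).cthickening δ)

lemma lipschitzWith_infDist_convexHull_lineMap {ι : Type*} [Fintype ι] (f g : ι → E)
    {U : Set ι} (hU : U.Nonempty) (y : E) :
    LipschitzWith (∑ i, nndist (f i) (g i))
      fun t : ℝ => infDist y (convexHull ℝ ((fun i => lineMap (f i) (g i) t) '' U)) := by
  refine LipschitzWith.of_le_add_mul _ fun t t' => ?_
  refine infDist_le_infDist_add_of_subset_cthickening y (hU.image _).convexHull
    (by positivity) (convexHull_subset_cthickening_convexHull ?_)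
  rintro _ ⟨i, hi, rfl⟩
  refine mem_cthickening_of_dist_le _ _ _ _ (mem_image_of_mem _ hi) ?_
  have hfg : dist (f i) (g i) ≤ ∑ j, dist (f j) (g j) :=
    Finset.single_le_sum (f := fun j => dist (f j) (g j)) (fun _ _ => dist_nonneg)
      (Finset.mem_univ i)
  push_cast [coe_nndist]
  rw [dist_lineMap_lineMap, dist_comm t' t, mul_comm]
  exact mul_le_mul_of_nonneg_right hfg dist_nonneg

lemma exists_disjoint_balls_subset_closedBall [Nontrivial E] (c : E) {r : ℝ} (hr : 0 < r) :
    ∃ y₁ y₂ : E, ∃ ε > 0, ball y₁ ε ⊆ closedBall c r ∧ ball y₂ ε ⊆ closedBall c r ∧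
      Disjoint (ball y₁ ε) (ball y₂ ε) := by
  obtain ⟨v, hv⟩ := exists_norm_eq E (by positivity : 0 ≤ r / 2)
  have hdist : dist (c + v) c = r / 2 := by rw [dist_eq_norm, add_sub_cancel_left, hv]
  refine ⟨c, c + v, r / 4, by positivity, ?_, ?_, ball_disjoint_ball ?_⟩
  · exact ball_subset_closedBall.trans (closedBall_subset_closedBall (by linarith))
  · exact ball_subset_closedBall.trans (closedBall_subset_closedBall' (by linarith))
  · rw [dist_comm, hdist]; linarith

lemma exists_mem_convexHull_sdiff_singleton_of_infDist_lt {S K : Set E} (hS : S.Finite)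
    (hSne : S.Nonempty) (hK : Convex ℝ K) {y₁ y₂ : E} {ε : ℝ} (hB₁ : ball y₁ ε ⊆ K)
    (hB₂ : ball y₂ ε ⊆ K) (hdisj : Disjoint (ball y₁ ε) (ball y₂ ε))
    (hd₁ : infDist y₁ (convexHull ℝ S) < ε) (hd₂ : infDist y₂ (convexHull ℝ S) < ε) :
    ∃ q ∈ K, q ∈ convexHull ℝ (S \ {q}) := by
  obtain ⟨z₁, hz₁, hyz₁⟩ := (infDist_lt_iff hSne.convexHull).1 hd₁
  obtain ⟨z₂, hz₂, hyz₂⟩ := (infDist_lt_iff hSne.convexHull).1 hd₂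
  rw [← mem_ball'] at hyz₁ hyz₂
  exact exists_mem_convexHull_sdiff_singleton hS hK ⟨hB₁ hyz₁, hz₁⟩ ⟨hB₂ hyz₂, hz₂⟩
    (hdisj.ne_of_mem hyz₁ hyz₂)

theorem exists_extreme_and_nonextreme_along_lineMap [Nontrivial E] {ι : Type*} [Fintype ι]
    (f g : ι → E) (U : Set ι) {c : E} {r : ℝ} (hr : 0 < r)
    (h₀ : ∃ p ∈ closedBall c r, p ∉ convexHull ℝ (f '' U \ {p}))
    (h₁ : ∃ q ∈ closedBall c r, q ∈ convexHull ℝ (g '' U \ {q})) :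
    ∃ t ∈ Icc (0 : ℝ) 1,
      (∃ p ∈ closedBall c r, p ∉ convexHull ℝ ((fun i => lineMap (f i) (g i) t) '' U \ {p})) ∧
      ∃ q ∈ closedBall c r, q ∈ convexHull ℝ ((fun i => lineMap (f i) (g i) t) '' U \ {q}) := by
  set S : ℝ → Set E := fun t => (fun i => lineMap (f i) (g i) t) '' U
  have hU : U.Nonempty := by
    obtain ⟨q, -, hq⟩ := h₁
    exact image_nonempty.1 ((convexHull_nonempty_iff.1 ⟨q, hq⟩).mono sdiff_subset)
  obtain ⟨y₁, y₂, ε, hε, hB₁, hB₂, hdisj⟩ := exists_disjoint_balls_subset_closedBall c hr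
  set F : ℝ → ℝ := fun t => infDist y₁ (convexHull ℝ (S t)) + infDist y₂ (convexHull ℝ (S t))
  have hF : Continuous F :=
    (lipschitzWith_infDist_convexHull_lineMap f g hU y₁).continuous.add
      (lipschitzWith_infDist_convexHull_lineMap f g hU y₂).continuous
  have hnear : ∀ t, infDist y₁ (convexHull ℝ (S t)) < ε → infDist y₂ (convexHull ℝ (S t)) < ε →
      ∃ q ∈ closedBall c r, q ∈ convexHull ℝ (S t \ {q}) := fun t =>
    exists_mem_convexHull_sdiff_singleton_of_infDist_lt ((toFinite U).image _) (hU.image _)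
      (convex_closedBall c r) hB₁ hB₂ hdisj
  by_contra! hno
  have hzero : ∀ t ∈ Icc (0 : ℝ) 1, (∃ q ∈ closedBall c r, q ∈ convexHull ℝ (S t \ {q})) →
      F t = 0 := by
    rintro t ht ⟨q, hqB, hq⟩
    have hall : ∀ p ∈ closedBall c r, p ∈ convexHull ℝ (S t \ {p}) := by
      by_contra! hp
      exact hno t ht hp q hqB hq
    have hmem : ∀ y ∈ closedBall c r, infDist y (convexHull ℝ (S t)) = 0 := fun y hy =>
      infDist_zero_of_mem (convexHull_mono sdiff_subset (hall y hy))
    simp only [F, hmem y₁ (hB₁ (mem_ball_self hε)), hmem y₂ (hB₂ (mem_ball_self hε)), add_zero]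
  have hF₀ : ε ≤ F 0 := by
    by_contra! hlt
    have hd₁ := infDist_nonneg (x := y₁) (s := convexHull ℝ (S 0))
    have hd₂ := infDist_nonneg (x := y₂) (s := convexHull ℝ (S 0))
    obtain ⟨q, hqB, hq⟩ := hnear 0 (by linarith) (by linarith)
    exact hno 0 (left_mem_Icc.2 zero_le_one) (by simpa [S] using h₀) q hqB hq
  have hF₁ : F 1 = 0 := hzero 1 (right_mem_Icc.2 zero_le_one) (by simpa [S] using h₁)
  obtain ⟨t, ht, hFt⟩ : ε / 2 ∈ F '' Icc 0 1 :=
    intermediate_value_Icc' zero_le_one hF.continuousOn ⟨by linarith, by linarith⟩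
  have hd₁ := infDist_nonneg (x := y₁) (s := convexHull ℝ (S t))
  have hd₂ := infDist_nonneg (x := y₂) (s := convexHull ℝ (S t))
  have hFt₀ := hzero t ht (hnear t (by linarith) (by linarith))
  linarith

end

/-- If a disk `D = R i₀` is *potential* (some realization has `D`'s point as an extreme
point of the convex hull, and some realization does not), then `D` is *unstable*: there
is a fixed realization `P'` of the other disks and points `p, q ∈ D` for which the
combinatorial structures of the convex hulls of `P' ∪ {p}` and `P' ∪ {q}` differ —
either the hull vertices other than the point of `D` differ, or the point of `D` is a
hull vertex in one case but not in the other. -/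
theorem stmt16 (n : ℕ) (c : Fin n → EuclideanSpace ℝ (Fin 2)) (r : Fin n → ℝ)
    (hr : ∀ i, 0 < r i) (i₀ : Fin n)
    (hpot1 : ∃ P : Fin n → EuclideanSpace ℝ (Fin 2),
      (∀ i, P i ∈ closedBall (c i) (r i)) ∧
      P i₀ ∉ convexHull ℝ (Set.range P \ {P i₀}))
    (hpot2 : ∃ P : Fin n → EuclideanSpace ℝ (Fin 2),
      (∀ i, P i ∈ closedBall (c i) (r i)) ∧
      P i₀ ∈ convexHull ℝ (Set.range P \ {P i₀})) :
    ∃ P' : Fin n → EuclideanSpace ℝ (Fin 2),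
      (∀ i, i ≠ i₀ → P' i ∈ closedBall (c i) (r i)) ∧
      ∃ p ∈ closedBall (c i₀) (r i₀), ∃ q ∈ closedBall (c i₀) (r i₀),
        ¬ (hullVertices (insert p (P' '' {i | i ≠ i₀})) \ {p}
              = hullVertices (insert q (P' '' {i | i ≠ i₀})) \ {q}
            ∧ (p ∈ hullVertices (insert p (P' '' {i | i ≠ i₀}))
              ↔ q ∈ hullVertices (insert q (P' '' {i | i ≠ i₀})))) := by
  obtain ⟨P₁, hP₁, hext⟩ := hpot1
  obtain ⟨P₂, hP₂, hin⟩ := hpot2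
  have hext' : P₁ i₀ ∉ convexHull ℝ (P₁ '' {i | i ≠ i₀} \ {P₁ i₀}) := fun h =>
    hext (convexHull_mono (sdiff_subset_sdiff_left (image_subset_range _ _)) h)
  have hin' : P₂ i₀ ∈ convexHull ℝ (P₂ '' {i | i ≠ i₀} \ {P₂ i₀}) := by
    refine convexHull_mono ?_ hin
    rintro _ ⟨⟨i, rfl⟩, hi⟩
    exact ⟨⟨i, fun h => hi (h ▸ rfl), rfl⟩, hi⟩
  obtain ⟨t, ht, ⟨p, hpB, hp⟩, q, hqB, hq⟩ :=
    exists_extreme_and_nonextreme_along_lineMap P₁ P₂ {i | i ≠ i₀} (hr i₀)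
      ⟨P₁ i₀, hP₁ i₀, hext'⟩ ⟨P₂ i₀, hP₂ i₀, hin'⟩
  refine ⟨fun i => lineMap (P₁ i) (P₂ i) t, fun i _ => ?_, p, hpB, q, hqB, fun h => ?_⟩
  · exact (convex_closedBall (c i) (r i)).lineMap_mem (hP₁ i) (hP₂ i) ht
  · rw [mem_hullVertices_insert_iff, mem_hullVertices_insert_iff] at h
    exact h.2.1 hp hq
end

section
/- Let R be a finite family of disks in ℝ² and define I as the intersection of all closed half-planes H such that H intersects every disk of R. Then a disk D ∈ R is impossible (its realized point is never an extreme point of the convex hull, for any realization) if and only if D ⊆ I. -/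
/-!
If a half-plane meeting every disk misses a point `x` of `D`, realize `D` by `x` and every other
disk by a point of that half-plane: the convex hull of the other points stays in the half-plane,
so `x` is extreme. Conversely, let `p = P i₀` be extreme for some realization `P`. For every `v` in
the open, nonempty set of directions strictly separating `p` from the other points, the half-plane
`{⟪v, ·⟫ ≤ ⟪v, p⟫}` meets every disk, so `D ⊆ I` forces `p` to maximize `⟪v, ·⟫` on `D`. As `D`
has positive radius, this puts `v` on the line through `p - c`, which contains no open set of
the plane.
-/

open Metric Set Module Submodule InnerProductSpace
open scoped RealInnerProductSpace

variable {E : Type*}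

theorem apply_le_of_forall_mem_convexHull_diff [AddCommGroup E] [Module ℝ E] {ι : Type*}
    {K : ι → Set E} {i₀ : ι}
    (h : ∀ P : ι → E, (∀ i, P i ∈ K i) → P i₀ ∈ convexHull ℝ (range P \ {P i₀}))
    {f : E →ₗ[ℝ] ℝ} {a : ℝ} (hf : ∀ i, ∃ y ∈ K i, f y ≤ a) {x : E} (hx : x ∈ K i₀) :
    f x ≤ a := by
  classical
  choose y hyK hya using hf
  set P := Function.update y i₀ x
  have hP : ∀ i, P i ∈ K i := by
    intro i
    rcases eq_or_ne i i₀ with rfl | hi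
    · simpa [P] using hx
    · simpa [P, hi] using hyK i
  have hsub : range P \ {x} ⊆ {z | f z ≤ a} := by
    rintro _ ⟨⟨i, rfl⟩, hPi⟩
    have hi : i ≠ i₀ := by rintro rfl; simp [P] at hPi
    simpa [P, hi] using hya i
  have hx_hull : x ∈ convexHull ℝ (range P \ {x}) := by simpa [P] using h P hP
  exact convexHull_min hsub (convex_halfSpace_le f.isLinear a) hx_hull

section InnerProductSpace

variable [NormedAddCommGroup E] [InnerProductSpace ℝ E]

theorem span_singleton_ne_top_of_one_lt_finrank (hE : 1 < finrank ℝ E) (x : E) :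
    span ℝ {x} ≠ ⊤ := by
  intro h
  have := finrank_span_le_card (R := ℝ) ({x} : Set E)
  rw [h, finrank_top] at this
  simp at this
  omega

theorem mem_span_sub_of_isMaxOn_inner_closedBall {c p v : E} {r : ℝ} (hr : 0 < r)
    (hp : p ∈ closedBall c r) (hmax : IsMaxOn (⟪v, ·⟫) (closedBall c r) p) :
    v ∈ span ℝ {p - c} := by
  rcases eq_or_ne v 0 with rfl | hv
  · exact zero_mem _
  have hv' : 0 < ‖v‖ := norm_pos_iff.mpr hv
  have htop : c + (r / ‖v‖) • v ∈ closedBall c r := by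
    rw [mem_closedBall_iff_norm, add_sub_cancel_left, norm_smul,
      Real.norm_of_nonneg (by positivity), div_mul_cancel₀ _ hv'.ne']
  have hle : ⟪v, c⟫ + r * ‖v‖ ≤ ⟪v, p⟫ := by
    have : ⟪v, c + (r / ‖v‖) • v⟫ ≤ ⟪v, p⟫ := hmax htop
    rw [inner_add_right, real_inner_smul_right, real_inner_self_eq_norm_sq] at this
    field_simp at this
    linarith
  have hpc : ‖p - c‖ ≤ r := mem_closedBall_iff_norm.mp hp
  have hcs : ⟪v, p - c⟫ ≤ ‖v‖ * ‖p - c‖ := real_inner_le_norm v (p - c)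
  rw [inner_sub_right] at hcs
  have hpc' : ‖p - c‖ = r := by nlinarith
  -- equality in Cauchy–Schwarz
  have hpar : ‖p - c‖ • v = ‖v‖ • (p - c) := by
    rw [← inner_eq_norm_mul_iff_real, inner_sub_right]
    nlinarith
  refine mem_span_singleton.mpr ⟨‖v‖ / ‖p - c‖, ?_⟩
  rw [div_eq_inv_mul, mul_smul, ← hpar, smul_smul, inv_mul_cancel₀ (by linarith), one_smul]

theorem isOpen_setOf_forall_inner_lt {S : Set E} (hS : S.Finite) (p : E) :
    IsOpen {v : E | ∀ z ∈ S, ⟪v, z⟫ < ⟪v, p⟫} := by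
  simp only [ofPred_forall]
  exact hS.isOpen_biInter fun z _ =>
    isOpen_lt (continuous_id.inner continuous_const) (continuous_id.inner continuous_const)

theorem exists_forall_inner_lt_of_notMem_convexHull [CompleteSpace E] {S : Set E}
    (hS : S.Finite) {p : E} (hp : p ∉ convexHull ℝ S) : ∃ v : E, ∀ z ∈ S, ⟪v, z⟫ < ⟪v, p⟫ := by
  obtain ⟨f, u, hfS, hup⟩ :=
    geometric_hahn_banach_closed_point (convex_convexHull ℝ S) (hS.isClosed_convexHull (𝕜 := ℝ)) hp
  refine ⟨(toDual ℝ E).symm f, fun z hz => ?_⟩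
  simp only [toDual_symm_apply]
  exact (hfS z (subset_convexHull ℝ S hz)).trans hup

theorem mem_convexHull_diff_of_closedBall_subset [FiniteDimensional ℝ E]
    (hE : 1 < finrank ℝ E) {ι : Type*} [Finite ι] {c : ι → E} {r : ι → ℝ} {i₀ : ι}
    (hr₀ : 0 < r i₀)
    (hI : closedBall (c i₀) (r i₀) ⊆ {x : E | ∀ (f : E →L[ℝ] ℝ) (a : ℝ), f ≠ 0 →
      (∀ i, ∃ y ∈ closedBall (c i) (r i), f y ≤ a) → f x ≤ a})
    {P : ι → E} (hP : ∀ i, P i ∈ closedBall (c i) (r i)) :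
    P i₀ ∈ convexHull ℝ (range P \ {P i₀}) := by
  by_contra hp
  have hS : (range P \ {P i₀}).Finite := (finite_range P).sdiff
  set U := {v : E | ∀ z ∈ range P \ {P i₀}, ⟪v, z⟫ < ⟪v, P i₀⟫}
  have hU : U ⊆ span ℝ {P i₀ - c i₀} := by
    intro v hv
    rcases eq_or_ne v 0 with rfl | hv0
    · exact zero_mem _
    refine mem_span_sub_of_isMaxOn_inner_closedBall hr₀ (hP i₀) fun x hx => ?_
    refine hI hx (toDual ℝ E v) ⟪v, P i₀⟫ ((toDual ℝ E).map_ne_zero_iff.mpr hv0)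
      fun i => ⟨P i, hP i, ?_⟩
    by_cases hi : P i = P i₀
    · simp [hi]
    · exact (hv (P i) ⟨mem_range_self i, hi⟩).le
  have hUopen : IsOpen U := isOpen_setOf_forall_inner_lt hS _
  have hUne : U.Nonempty := exists_forall_inner_lt_of_notMem_convexHull hS hp
  exact span_singleton_ne_top_of_one_lt_finrank hE _
    (eq_top_of_nonempty_interior' _ (hUne.mono (hUopen.subset_interior_iff.mpr hU)))

end InnerProductSpace

/-- Let `I` be the intersection of all closed half-planes that intersect every disk of a
family `R` of disks.  A disk `D = R i₀` is *impossible* (its realized point is never an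
extreme point of the convex hull, for any realization) if and only if `D ⊆ I`. -/
theorem stmt18 (n : ℕ) (c : Fin n → EuclideanSpace ℝ (Fin 2)) (r : Fin n → ℝ)
    (hr : ∀ i, 0 < r i) (i₀ : Fin n) :
    (∀ P : Fin n → EuclideanSpace ℝ (Fin 2),
        (∀ i, P i ∈ closedBall (c i) (r i)) →
        P i₀ ∈ convexHull ℝ (Set.range P \ {P i₀}))
    ↔ closedBall (c i₀) (r i₀) ⊆
        {x : EuclideanSpace ℝ (Fin 2) |
          ∀ (f : EuclideanSpace ℝ (Fin 2) →L[ℝ] ℝ) (a : ℝ), f ≠ 0 →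
            (∀ i, ∃ y ∈ closedBall (c i) (r i), f y ≤ a) → f x ≤ a} :=
  ⟨fun h _ hx f _ _ hf => apply_le_of_forall_mem_convexHull_diff h (f := f.toLinearMap) hf hx,
    fun hI _ => mem_convexHull_diff_of_closedBall_subset (by simp) (hr i₀) hI⟩
end
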